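/- Let Q be a symmetric n×n real matrix, d ∈ ℝⁿ, A ∈ ℝ^{m×n}, b ∈ ℝᵐ, x̄ ∈ ℝⁿ, ν_R ∈ ℝ and c ∈ ℝⁿ. Suppose there exist a positive semidefinite matrix S ∈ 𝒮^{n+1} and an entrywise nonnegative matrix T ∈ ℝ^{(m+2)×(m+2)} such that [Q, d; dᵀ, −ν_R] = S + Bᵀ T B, where B ∈ ℝ^{(m+2)×(n+1)} is the block matrix with rows [−A, b], [0ᵀ, 1] and [−cᵀ, 1 + cᵀx̄]. Then for every x ∈ ℝⁿ with Ax ≤ b and cᵀ(x − x̄) ≤ 1 one has xᵀQx + 2dᵀx ≥ ν_R. -/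

import Mathlib

open Matrix

/-- The `(n+1) × (n+1)` symmetric matrix `[Q, d; dᵀ, −ν]`. -/
noncomputable def objMat {n : ℕ} (Q : Matrix (Fin n) (Fin n) ℝ) (d : Fin n → ℝ)
    (ν : ℝ) : Matrix (Fin n ⊕ Unit) (Fin n ⊕ Unit) ℝ :=
  Matrix.of fun i j =>
    match i, j with
    | Sum.inl i, Sum.inl j => Q i j
    | Sum.inl i, Sum.inr _ => d i
    | Sum.inr _, Sum.inl j => d j
    | Sum.inr _, Sum.inr _ => -ν

/-- The `(m+2) × (n+1)` block matrix `B` with row blocks `[−A, b]`, `[0ᵀ, 1]` and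
`[−cᵀ, 1 + cᵀx̄]`. -/
noncomputable def cutMat {n m : ℕ} (A : Matrix (Fin m) (Fin n) ℝ) (b : Fin m → ℝ)
    (c xbar : Fin n → ℝ) : Matrix ((Fin m ⊕ Unit) ⊕ Unit) (Fin n ⊕ Unit) ℝ :=
  Matrix.of fun i j =>
    match i, j with
    | Sum.inl (Sum.inl i), Sum.inl j => -A i j
    | Sum.inl (Sum.inl i), Sum.inr _ => b i
    | Sum.inl (Sum.inr _), Sum.inl _ => 0
    | Sum.inl (Sum.inr _), Sum.inr _ => 1
    | Sum.inr _, Sum.inl j => -c j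
    | Sum.inr _, Sum.inr _ => 1 + c ⬝ᵥ xbar

/-!
Evaluate both sides of `[Q, d; dᵀ, −ν_R] = S + Bᵀ T B` as quadratic forms at the lifted point
`z = (x, 1)`. The left side gives `xᵀQx + 2dᵀx − ν_R`. On the right, `zᵀSz ≥ 0` since `S ⪰ 0`,
and `Bz = (b − Ax, 1, 1 − cᵀ(x − x̄))` is entrywise nonnegative exactly when `x` is feasible and
satisfies the cut, so `(Bz)ᵀ T (Bz) ≥ 0` because `T ≥ 0`.
-/

section

variable {ι κ R : Type*} [Fintype ι] [Fintype κ]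

theorem dotProduct_transpose_mul_mul_mulVec [CommSemiring R] (B : Matrix κ ι R)
    (T : Matrix κ κ R) (z : ι → R) :
    z ⬝ᵥ ((Bᵀ * T * B) *ᵥ z) = (B *ᵥ z) ⬝ᵥ (T *ᵥ (B *ᵥ z)) := by
  rw [← mulVec_mulVec, ← mulVec_mulVec, dotProduct_mulVec, vecMul_transpose]

theorem dotProduct_mulVec_nonneg_of_nonneg [CommSemiring R] [PartialOrder R] [IsOrderedRing R]
    {T : Matrix κ κ R} (hT : ∀ i j, 0 ≤ T i j) {v : κ → R} (hv : 0 ≤ v) :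
    0 ≤ v ⬝ᵥ (T *ᵥ v) :=
  dotProduct_nonneg_of_nonneg hv fun i => dotProduct_nonneg_of_nonneg (hT i) hv

theorem dotProduct_add_transpose_mul_mul_mulVec_nonneg [CommRing R] [PartialOrder R]
    [IsOrderedRing R] [StarRing R] [TrivialStar R]
    {S : Matrix ι ι R} {T : Matrix κ κ R} {B : Matrix κ ι R} {z : ι → R}
    (hS : S.PosSemidef) (hT : ∀ i j, 0 ≤ T i j) (hBz : 0 ≤ B *ᵥ z) :
    0 ≤ z ⬝ᵥ ((S + Bᵀ * T * B) *ᵥ z) := by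
  have hSz : 0 ≤ z ⬝ᵥ (S *ᵥ z) := by simpa using hS.dotProduct_mulVec_nonneg z
  rw [add_mulVec, dotProduct_add, dotProduct_transpose_mul_mul_mulVec]
  exact add_nonneg hSz (dotProduct_mulVec_nonneg_of_nonneg hT hBz)

end

def homogenize {n : ℕ} (x : Fin n → ℝ) : Fin n ⊕ Unit → ℝ := Sum.elim x fun _ => 1

theorem homogenize_dotProduct_objMat_mulVec {n : ℕ} (Q : Matrix (Fin n) (Fin n) ℝ)
    (d : Fin n → ℝ) (ν : ℝ) (x : Fin n → ℝ) :
    homogenize x ⬝ᵥ (objMat Q d ν *ᵥ homogenize x) = x ⬝ᵥ (Q *ᵥ x) + 2 * (d ⬝ᵥ x) - ν := by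
  simp only [homogenize, objMat, dotProduct, mulVec, of_apply, Fintype.sum_sum_type,
    Sum.elim_inl, Sum.elim_inr, Finset.univ_unique, Finset.sum_singleton, mul_one, one_mul,
    mul_add, Finset.sum_add_distrib, mul_comm (x _) (d _)]
  ring

theorem cutMat_mulVec_homogenize {n m : ℕ} (A : Matrix (Fin m) (Fin n) ℝ) (b : Fin m → ℝ)
    (c xbar x : Fin n → ℝ) :
    cutMat A b c xbar *ᵥ homogenize x =
      Sum.elim (Sum.elim (b - A *ᵥ x) fun _ => 1) fun _ => 1 - c ⬝ᵥ (x - xbar) := by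
  ext ((i | _) | _) <;>
    simp only [homogenize, cutMat, mulVec, dotProduct, of_apply, Fintype.sum_sum_type,
      Sum.elim_inl, Sum.elim_inr, Finset.univ_unique, Finset.sum_singleton, Pi.sub_apply,
      neg_mul, zero_mul, mul_one, mul_sub, Finset.sum_neg_distrib, Finset.sum_sub_distrib,
      Finset.sum_const_zero] <;>
    ring

theorem cutMat_mulVec_homogenize_nonneg {n m : ℕ} {A : Matrix (Fin m) (Fin n) ℝ}
    {b : Fin m → ℝ} {c xbar x : Fin n → ℝ} (hAx : A *ᵥ x ≤ b) (hc : c ⬝ᵥ (x - xbar) ≤ 1) :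
    0 ≤ cutMat A b c xbar *ᵥ homogenize x := by
  rw [cutMat_mulVec_homogenize]
  rintro ((i | _) | _)
  · exact sub_nonneg.2 (hAx i)
  · exact zero_le_one
  · exact sub_nonneg.2 hc

theorem valid_cut_of_SOS {n m : ℕ} (Q : Matrix (Fin n) (Fin n) ℝ)
    (d : Fin n → ℝ) (A : Matrix (Fin m) (Fin n) ℝ) (b : Fin m → ℝ)
    (xbar : Fin n → ℝ) (νR : ℝ) (c : Fin n → ℝ)
    (S : Matrix (Fin n ⊕ Unit) (Fin n ⊕ Unit) ℝ)
    (T : Matrix ((Fin m ⊕ Unit) ⊕ Unit) ((Fin m ⊕ Unit) ⊕ Unit) ℝ)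
    (hS : S.PosSemidef) (hT : ∀ i j, 0 ≤ T i j)
    (hdecomp : objMat Q d νR = S + (cutMat A b c xbar)ᵀ * T * cutMat A b c xbar) :
    ∀ x : Fin n → ℝ, A *ᵥ x ≤ b → c ⬝ᵥ (x - xbar) ≤ 1 →
      νR ≤ x ⬝ᵥ (Q *ᵥ x) + 2 * (d ⬝ᵥ x) := by
  intro x hAx hc
  have h := dotProduct_add_transpose_mul_mul_mulVec_nonneg hS hT
    (cutMat_mulVec_homogenize_nonneg hAx hc)
  rw [← hdecomp, homogenize_dotProduct_objMat_mulVec] at h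
  linarith
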